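/- arXiv:1708.03853 — 6 statements merged into one kernel-verified Lean document; each statement's English description precedes it below -/
import Mathlib

section
/- Let G be the join of two graphs G₁ and G₂ and let p : S → C be a partial coloring of G such that S ∩ V(G₁) is nonempty, p takes the single value j on all of S ∩ V(G₁), and p takes at least two distinct values on S ∩ V(G₂). Let c* be the extension of p that assigns color j to every uncolored vertex. Then for every total coloring c extending p, the number of vertices happy with respect to c is at most the number of vertices happy with respect to c*. -/
/-- A vertex is happy w.r.t. a total coloring if all its neighbors share its color. -/
def IsHappyVertex {V Col : Type*} (G : SimpleGraph V) (c : V → Col) (v : V) : Prop :=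
  ∀ u, G.Adj v u → c u = c v

/-- The number of happy vertices w.r.t. a total coloring. -/
noncomputable def happyVertexCount {V Col : Type*} (G : SimpleGraph V) (c : V → Col) : ℕ :=
  {v | IsHappyVertex G c v}.ncard

/-- The join of two graphs: both graphs together with all edges between them. -/
def GraphJoin {V₁ V₂ : Type*} (G₁ : SimpleGraph V₁) (G₂ : SimpleGraph V₂) :
    SimpleGraph (V₁ ⊕ V₂) where
  Adj x y :=
    match x, y with
    | Sum.inl a, Sum.inl b => G₁.Adj a b
    | Sum.inr a, Sum.inr b => G₂.Adj a b
    | Sum.inl _, Sum.inr _ => True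
    | Sum.inr _, Sum.inl _ => True
  symm := by
    constructor
    rintro (a | a) (b | b) h <;> simp_all
    · exact h.symm
    · exact h.symm
  loopless := by
    constructor
    rintro (a | a) h
    · exact G₁.irrefl h
    · exact G₂.irrefl h

/-!
Every vertex of `G₁` sees the two differently precolored vertices of `G₂`, so no vertex of `G₁`
is ever happy. A vertex of `G₂` that is happy under `c` sees a precolored vertex of `G₁`, so it
and all its neighbours have colour `j` under `c`; since `cstar` agrees with `c` or equals `j`
everywhere, the vertex stays happy under `cstar`.
-/

theorem GraphJoin.adj_inl_inr {V₁ V₂ : Type*} (G₁ : SimpleGraph V₁) (G₂ : SimpleGraph V₂)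
    (a : V₁) (b : V₂) : (GraphJoin G₁ G₂).Adj (Sum.inl a) (Sum.inr b) :=
  trivial

theorem GraphJoin.adj_inr_inl {V₁ V₂ : Type*} (G₁ : SimpleGraph V₁) (G₂ : SimpleGraph V₂)
    (a : V₂) (b : V₁) : (GraphJoin G₁ G₂).Adj (Sum.inr a) (Sum.inl b) :=
  trivial

section Happy

variable {V Col : Type*} {G : SimpleGraph V} {c c' : V → Col} {v : V}

theorem not_isHappyVertex_of_adj_of_ne {x y : V} (hx : G.Adj v x) (hy : G.Adj v y)
    (hxy : c x ≠ c y) : ¬IsHappyVertex G c v :=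
  fun hv ↦ hxy ((hv x hx).trans (hv y hy).symm)

theorem IsHappyVertex.of_forall_eq_or_eq {j : Col} (hv : IsHappyVertex G c v) (hcv : c v = j)
    (hc' : ∀ x, c' x = c x ∨ c' x = j) : IsHappyVertex G c' v := by
  have hj : ∀ x, c x = j → c' x = j := fun x hx ↦ (hc' x).elim (·.trans hx) id
  intro u hu
  rw [hj v hcv, hj u ((hv u hu).trans hcv)]

theorem happyVertexCount_le_of_subset [Finite V]
    (h : {v | IsHappyVertex G c v} ⊆ {v | IsHappyVertex G c' v}) :
    happyVertexCount G c ≤ happyVertexCount G c' :=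
  Set.ncard_le_ncard h

end Happy

/-- Suppose the precoloring of the join of `G₁` and `G₂` takes the single value `j` on the
(nonempty) set of precolored vertices of `G₁` and at least two distinct values on the precolored
vertices of `G₂`.  Then the extension `cstar` of `p` coloring every uncolored vertex with `j`
has at least as many happy vertices as any extension `c` of `p`. -/
theorem join_one_color_side_optimal_extension
    {V₁ V₂ Col : Type*} [Fintype V₁] [Fintype V₂]
    (G₁ : SimpleGraph V₁) (G₂ : SimpleGraph V₂)
    (S : Set (V₁ ⊕ V₂)) (p : S → Col) (j : Col)
    (hne : ∃ a : V₁, Sum.inl a ∈ S)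
    (hconst : ∀ (a : V₁) (ha : Sum.inl a ∈ S), p ⟨Sum.inl a, ha⟩ = j)
    (htwo : ∃ (a b : V₂) (ha : Sum.inr a ∈ S) (hb : Sum.inr b ∈ S),
      p ⟨Sum.inr a, ha⟩ ≠ p ⟨Sum.inr b, hb⟩)
    (cstar : V₁ ⊕ V₂ → Col)
    (hcstar₁ : ∀ x (hx : x ∈ S), cstar x = p ⟨x, hx⟩)
    (hcstar₂ : ∀ x, x ∉ S → cstar x = j)
    (c : V₁ ⊕ V₂ → Col) (hc : ∀ x (hx : x ∈ S), c x = p ⟨x, hx⟩) :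
    happyVertexCount (GraphJoin G₁ G₂) c ≤ happyVertexCount (GraphJoin G₁ G₂) cstar := by
  obtain ⟨a₀, ha₀⟩ := hne
  obtain ⟨x, y, hx, hy, hxy⟩ := htwo
  have hcstar : ∀ v, cstar v = c v ∨ cstar v = j := fun v ↦
    (em (v ∈ S)).imp (fun hv ↦ (hcstar₁ v hv).trans (hc v hv).symm) (hcstar₂ v)
  refine happyVertexCount_le_of_subset fun v hv ↦ ?_
  cases v with
  | inl a =>
    refine absurd hv (not_isHappyVertex_of_adj_of_ne (GraphJoin.adj_inl_inr G₁ G₂ a x)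
      (GraphJoin.adj_inl_inr G₁ G₂ a y) ?_)
    rwa [hc _ hx, hc _ hy]
  | inr w =>
    have hcw : c (Sum.inr w) = j := by
      rw [← hv _ (GraphJoin.adj_inr_inl G₁ G₂ w a₀), hc _ ha₀, hconst]
    exact IsHappyVertex.of_forall_eq_or_eq hv hcw hcstar
end

section
/- Let G be a finite simple graph with m edges, and let H be the vertex–edge incidence graph of G: the vertex set of H is V(G) ⊔ E(G), and a_u ∈ V(G) is adjacent in H to b_e ∈ E(G) if and only if u is an endpoint of e (there are no other edges in H). Then for every total coloring c' of H, the number of happy edges of H with respect to c' is at most m plus the number of happy edges of G with respect to the restriction of c' to V(G). -/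
/-- The number of happy edges (edges whose endpoints share a color) w.r.t. a total coloring. -/
noncomputable def happyEdgeCount {V Col : Type*} (G : SimpleGraph V) (c : V → Col) : ℕ :=
  {e ∈ G.edgeSet | (Sym2.map c e).IsDiag}.ncard

/-- The vertex–edge incidence graph of a graph: a vertex `u` of `G` is adjacent to an
edge-vertex `e` of `G` exactly when `u` is an endpoint of `e`. -/
def IncidenceGraph {V : Type*} (G : SimpleGraph V) : SimpleGraph (V ⊕ G.edgeSet) where
  Adj x y :=
    match x, y with
    | Sum.inl u, Sum.inr e => u ∈ (e : Sym2 V)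
    | Sum.inr e, Sum.inl u => u ∈ (e : Sym2 V)
    | _, _ => False
  symm := by
    constructor
    rintro (u | e) (u' | e') h <;> simp_all
  loopless := by
    constructor
    rintro (u | e) h <;> simp_all

/-! A happy edge of the incidence graph is an incidence `(u, e)` with `c' u = c' e`. An edge
`e = s(a, b)` of `G` carries at most two of them, and two only when `c' a = c' e = c' b`, in which
case `e` is happy in `G`. Summing `1 + [e happy]` over the edges of `G` gives the bound. -/

theorem Set.ncard_eq_sum_ncard_fiber {α β : Type*} [Fintype α] [Fintype β] (s : Set (α × β)) :
    s.ncard = ∑ b, {a | (a, b) ∈ s}.ncard := by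
  classical
  simp only [Set.ncard_eq_toFinset_card', Set.toFinset_ofPred, Finset.card_filter]
  rw [← Fintype.sum_prod_type_right (fun p => if p ∈ s then 1 else 0), ← Finset.card_filter]
  congr 1
  ext
  simp

theorem Set.ncard_sep_eq_sum_ite {α : Type*} (s : Set α) [Fintype s] (p : α → Prop)
    [DecidablePred p] : {x ∈ s | p x}.ncard = ∑ x : s, if p x then 1 else 0 := by
  have : {x ∈ s | p x} = Subtype.val '' {x : s | p x} := by ext; simp [and_comm]
  rw [this, Set.ncard_image_of_injective _ Subtype.val_injective, Set.ncard_eq_toFinset_card',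
    Set.toFinset_ofPred, Finset.card_filter]

theorem Sym2.ncard_mem_fiber_le {α β : Type*} [DecidableEq β] (z : Sym2 α) (f : α → β) (k : β) :
    {u | u ∈ z ∧ f u = k}.ncard ≤ 1 + if (z.map f).IsDiag then 1 else 0 := by
  induction z using Sym2.ind with
  | _ a b =>
  simp only [Sym2.mem_iff, Sym2.map_mk, Sym2.mk_isDiag_iff]
  have hsub : {u | (u = a ∨ u = b) ∧ f u = k} ⊆ {a, b} := fun u hu => hu.1
  split_ifs with hab
  · calc {u | (u = a ∨ u = b) ∧ f u = k}.ncard ≤ ({a, b} : Set α).ncard :=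
          Set.ncard_le_ncard hsub
      _ ≤ ({b} : Set α).ncard + 1 := Set.ncard_insert_le a {b}
      _ = 1 + 1 := by rw [Set.ncard_singleton]
  · refine (Set.ncard_le_one ((Set.toFinite {a, b}).subset hsub)).2 ?_
    rintro u ⟨rfl | rfl, hu⟩ v ⟨rfl | rfl, hv⟩ <;>
      first | rfl | exact absurd (hu.trans hv.symm) (by tauto)

theorem happyEdgeCount_incidenceGraph {V Col : Type*} (G : SimpleGraph V)
    (c : V ⊕ G.edgeSet → Col) :
    happyEdgeCount (IncidenceGraph G) c =
      {p : V × G.edgeSet | p.1 ∈ (p.2 : Sym2 V) ∧ c (.inl p.1) = c (.inr p.2)}.ncard := by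
  have hinj : Function.Injective fun p : V × G.edgeSet => s(Sum.inl p.1, Sum.inr p.2) := by
    rintro ⟨u, e⟩ ⟨u', e'⟩ h
    simpa using h
  rw [happyEdgeCount, ← Set.ncard_image_of_injective _ hinj]
  congr 1
  ext x
  induction x using Sym2.ind with
  | _ x y =>
  rcases x with u | e <;> rcases y with u' | e' <;> simp [IncidenceGraph]
  exact fun _ => eq_comm

theorem incidenceGraph_happyEdges_le_general
    {V Col : Type*} [Fintype V] (G : SimpleGraph V)
    (c' : (V ⊕ G.edgeSet) → Col) :
    happyEdgeCount (IncidenceGraph G) c' ≤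
      G.edgeSet.ncard + happyEdgeCount G (fun v => c' (Sum.inl v)) := by
  classical
  calc happyEdgeCount (IncidenceGraph G) c'
      = ∑ e : G.edgeSet, {u | u ∈ (e : Sym2 V) ∧ c' (.inl u) = c' (.inr e)}.ncard := by
        rw [happyEdgeCount_incidenceGraph, Set.ncard_eq_sum_ncard_fiber]; rfl
    _ ≤ ∑ e : G.edgeSet, (1 + if ((e : Sym2 V).map (c' ∘ .inl)).IsDiag then 1 else 0) :=
        Finset.sum_le_sum fun e _ => Sym2.ncard_mem_fiber_le _ _ _
    _ = G.edgeSet.ncard + happyEdgeCount G (fun v => c' (Sum.inl v)) := by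
        rw [Finset.sum_add_distrib, happyEdgeCount, Set.ncard_sep_eq_sum_ite,
          Set.ncard_eq_toFinset_card']
        simp

/-- For any total coloring `c'` of the incidence graph `H` of `G`, the number of happy edges of
`H` is at most `m` plus the number of happy edges of `G` w.r.t. the restriction of `c'` to
the vertices of `G`. -/
theorem incidenceGraph_happyEdges_le
    {V Col : Type*} [Fintype V] [DecidableEq V] (G : SimpleGraph V) [DecidableRel G.Adj]
    (c' : (V ⊕ G.edgeSet) → Col) :
    happyEdgeCount (IncidenceGraph G) c' ≤
      G.edgeSet.ncard + happyEdgeCount G (fun v => c' (Sum.inl v)) :=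
  incidenceGraph_happyEdges_le_general G c'
end

section
/- Let G be a finite simple graph with m edges, and let H be the vertex–edge incidence graph of G. For every total coloring c of G there exists a total coloring c' of H that agrees with c on V(G) such that the number of happy edges of H with respect to c' is at least m plus the number of happy edges of G with respect to c. (Such a c' is obtained by coloring each edge-vertex b_e, for e = {u,v}, with the color c(u) of one of its endpoints.) -/
/-!
Color the edge-vertex of every edge `e = uv` of `G` with the color of a chosen endpoint `u`.
Then the incidence edge `u e` is happy, and so is `v e` whenever `uv` is happy in `G`;
these incidence edges are pairwise distinct because `u ≠ v`.
-/

def happyEdgeSet {V Col : Type*} (G : SimpleGraph V) (c : V → Col) : Set (Sym2 V) :=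
  {e ∈ G.edgeSet | (Sym2.map c e).IsDiag}

theorem Sym2.map_other_eq_of_isDiag_map {α β : Type*} {f : α → β} {a : α} {z : Sym2 α}
    (hz : (z.map f).IsDiag) (h : a ∈ z) : f (Sym2.Mem.other h) = f a := by
  rw [← Sym2.other_spec h, Sym2.map_mk, Sym2.mk_isDiag_iff] at hz
  exact hz.symm

theorem Sym2.mk_inl_inr_inj {α β : Type*} {a a' : α} {b b' : β} :
    s(Sum.inl a, Sum.inr b) = s(Sum.inl a', Sum.inr b') ↔ a = a' ∧ b = b' := by
  simp

namespace IncidenceGraph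

variable {V Col : Type*} {G : SimpleGraph V}

theorem mk_inl_inr_mem_happyEdgeSet {c : V ⊕ G.edgeSet → Col} {u : V} {e : G.edgeSet} :
    s(Sum.inl u, Sum.inr e) ∈ happyEdgeSet (IncidenceGraph G) c ↔
      u ∈ (e : Sym2 V) ∧ c (Sum.inl u) = c (Sum.inr e) :=
  and_congr Iff.rfl Sym2.mk_isDiag_iff

theorem ncard_edgeSet_add_happyEdgeCount_le [Finite V] (c : V → Col) (r : G.edgeSet → V)
    (hr : ∀ e : G.edgeSet, r e ∈ (e : Sym2 V)) :
    G.edgeSet.ncard + happyEdgeCount G c ≤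
      happyEdgeCount (IncidenceGraph G) (Sum.elim c (c ∘ r)) := by
  let rootEdge (e : G.edgeSet) : happyEdgeSet (IncidenceGraph G) (Sum.elim c (c ∘ r)) :=
    ⟨s(Sum.inl (r e), Sum.inr e), mk_inl_inr_mem_happyEdgeSet.2 ⟨hr e, rfl⟩⟩
  let otherEdge (e : happyEdgeSet G c) : happyEdgeSet (IncidenceGraph G) (Sum.elim c (c ∘ r)) :=
    ⟨s(Sum.inl (Sym2.Mem.other (hr ⟨e.1, e.2.1⟩)), Sum.inr ⟨e.1, e.2.1⟩),
      mk_inl_inr_mem_happyEdgeSet.2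
        ⟨Sym2.other_mem _, Sym2.map_other_eq_of_isDiag_map e.2.2 (hr ⟨e.1, e.2.1⟩)⟩⟩
  have hinj : Function.Injective (Sum.elim rootEdge otherEdge) := by
    refine Function.Injective.sumElim ?_ ?_ ?_
    · intro e e' h
      exact (Sym2.mk_inl_inr_inj.1 (congrArg Subtype.val h)).2
    · intro e e' h
      exact Subtype.ext (congrArg (·.1) (Sym2.mk_inl_inr_inj.1 (congrArg Subtype.val h)).2)
    · intro e e' h
      obtain ⟨hre, rfl⟩ := Sym2.mk_inl_inr_inj.1 (congrArg Subtype.val h)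
      exact Sym2.other_ne (G.not_isDiag_of_mem_edgeSet e'.2.1) (hr _) hre.symm
  calc G.edgeSet.ncard + happyEdgeCount G c
      = Nat.card (G.edgeSet ⊕ happyEdgeSet G c) :=
        Nat.card_sum.symm
    _ ≤ Nat.card (happyEdgeSet (IncidenceGraph G) (Sum.elim c (c ∘ r))) :=
        Nat.card_le_card_of_injective _ hinj
    _ = happyEdgeCount (IncidenceGraph G) (Sum.elim c (c ∘ r)) :=
        Nat.card_coe_set_eq _

end IncidenceGraph

theorem incidenceGraph_happyEdges_ge_general
    {V Col : Type*} [Fintype V] (G : SimpleGraph V)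
    (c : V → Col) :
    ∃ c' : (V ⊕ G.edgeSet) → Col, (∀ v, c' (Sum.inl v) = c v) ∧
      G.edgeSet.ncard + happyEdgeCount G c ≤ happyEdgeCount (IncidenceGraph G) c' :=
  ⟨Sum.elim c (c ∘ fun e => (e : Sym2 V).out.1), fun _ => rfl,
    IncidenceGraph.ncard_edgeSet_add_happyEdgeCount_le c _ fun e => Sym2.out_fst_mem _⟩

/-- For every total coloring `c` of `G` there is a total coloring `c'` of the incidence graph of
`G` agreeing with `c` on the vertices of `G` whose number of happy edges is at least `m` plus
the number of happy edges of `G` w.r.t. `c`. -/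
theorem incidenceGraph_happyEdges_ge
    {V Col : Type*} [Fintype V] [DecidableEq V] (G : SimpleGraph V) [DecidableRel G.Adj]
    (c : V → Col) :
    ∃ c' : (V ⊕ G.edgeSet) → Col, (∀ v, c' (Sum.inl v) = c v) ∧
      G.edgeSet.ncard + happyEdgeCount G c ≤ happyEdgeCount (IncidenceGraph G) c' :=
  incidenceGraph_happyEdges_ge_general G c
end

section
/- Let G be a finite simple graph, let X ⊆ V(G) with |X| = d, and suppose that V(G) \ X is a clique (any two distinct vertices of V(G) \ X are adjacent). Let p : S → C be a partial coloring of G and let C_U = (V(G) \ X) \ S be the set of uncolored clique vertices. If |C_U| > d + 1, then every total coloring c extending p that maximizes the number of happy edges among all extensions of p assigns the same color to all vertices of C_U. -/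
/-!
Let `U` be the set of uncolored clique vertices and suppose an optimal coloring `c` uses two
colors `a ≠ b` on `U`. Recoloring the `b`-colored vertices of `U` to `a` gains at least every edge
from them to the `a`-colored clique vertices and loses at most their edges to the other `b`-colored
vertices, so optimality gives `|K_a| + |U_b| ≤ |K_b| + |X_b|`, where `K_γ` and `X_γ` are the
`γ`-colored vertices of the clique and of `X`. Adding this to its mirror image shows that
`f γ = |U_γ| - |X_γ|` has `f a + f b ≤ 0` for any two colors present on `U`. Then the sum of `f`
over those colors is at most `0`, whereas it is at least `|U| - |X| ≥ 2`.
-/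

open Set

theorem Finset.sum_nonpos_of_add_nonpos {ι M : Type*} [AddCommGroup M] [LinearOrder M]
    [IsOrderedAddMonoid M] {s : Finset ι} {f : ι → M} (hs : 1 < s.card)
    (h : ∀ i ∈ s, ∀ j ∈ s, i ≠ j → f i + f j ≤ 0) : ∑ i ∈ s, f i ≤ 0 := by
  classical
  obtain ⟨i, hi, hmax⟩ := s.exists_max_image f (Finset.card_pos.1 (by omega))
  obtain ⟨j, hj, hji⟩ := s.exists_mem_ne hs i
  -- every value other than the maximal one is nonpositive, since `2 f k ≤ f k + f i ≤ 0`
  have hrest : ∀ k ∈ (s.erase i).erase j, f k ≤ 0 := by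
    intro k hk
    have hki : k ≠ i := Finset.ne_of_mem_erase (Finset.mem_of_mem_erase hk)
    have hks : k ∈ s := Finset.mem_of_mem_erase (Finset.mem_of_mem_erase hk)
    by_contra! hpos
    exact (add_pos hpos hpos).not_ge ((add_le_add le_rfl (hmax k hks)).trans (h k hks i hi hki))
  rw [← Finset.add_sum_erase s f hi, ← Finset.add_sum_erase _ f (Finset.mem_erase.2 ⟨hji, hj⟩),
    ← add_assoc]
  exact add_nonpos (h i hi j hj hji.symm) (Finset.sum_nonpos hrest)

section Fibers

variable {α β : Type*} [Finite α] (s : Set α) (f : α → β) (t : Finset β)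

theorem Set.ncard_le_sum_ncard_inter_preimage (h : MapsTo f s t) :
    s.ncard ≤ ∑ b ∈ t, (s ∩ f ⁻¹' {b}).ncard :=
  calc s.ncard ≤ (⋃ b ∈ t, s ∩ f ⁻¹' {b}).ncard :=
        ncard_le_ncard fun x hx => mem_biUnion (h hx) ⟨hx, rfl⟩
    _ ≤ _ := t.set_ncard_biUnion_le _

theorem Set.sum_ncard_inter_preimage_le : ∑ b ∈ t, (s ∩ f ⁻¹' {b}).ncard ≤ s.ncard := by
  have hdisj : (t : Set β).PairwiseDisjoint fun b => s ∩ f ⁻¹' {b} := fun b _ b' _ hbb' =>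
    ((disjoint_singleton.2 hbb').preimage f).mono inter_subset_right inter_subset_right
  rw [← finsum_mem_coe_finset, ← t.finite_toSet.ncard_biUnion (fun _ _ => toFinite _) hdisj]
  exact ncard_le_ncard (iUnion₂_subset fun _ _ => inter_subset_left)

end Fibers

namespace SimpleGraph

variable {V Col : Type*} (G : SimpleGraph V)

def happyEdges (c : V → Col) : Set (Sym2 V) := {e ∈ G.edgeSet | (Sym2.map c e).IsDiag}

theorem happyEdgeCount_eq_ncard_happyEdges (c : V → Col) :
    happyEdgeCount G c = (G.happyEdges c).ncard :=
  rfl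

variable {G}

@[simp]
theorem mk_mem_happyEdges {c : V → Col} {u v : V} :
    s(u, v) ∈ G.happyEdges c ↔ G.Adj u v ∧ c u = c v := by
  simp [happyEdges]

variable [Finite V] {c : V → Col} {S : Set V} {a b : Col}

theorem ncard_adj_le_of_recolor
    (hopt : ∀ c', EqOn c' c S → happyEdgeCount G c' ≤ happyEdgeCount G c)
    {B : Set V} (hBS : Disjoint B S) (hBb : B ⊆ c ⁻¹' {b}) (hab : a ≠ b) :
    {q ∈ B ×ˢ (c ⁻¹' {a}) | G.Adj q.1 q.2}.ncard ≤
      {q ∈ B ×ˢ (c ⁻¹' {b} \ B) | G.Adj q.1 q.2}.ncard := by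
  classical
  set c' := B.piecewise (fun _ => a) c
  have hc'_in : ∀ v ∈ B, c' v = a := fun v hv => piecewise_eq_of_mem _ _ _ hv
  have hc'_out : ∀ v ∉ B, c' v = c v := fun v hv => piecewise_eq_of_notMem _ _ _ hv
  have hgain : Sym2.mk.uncurry '' {q ∈ B ×ˢ (c ⁻¹' {a}) | G.Adj q.1 q.2} ⊆
      G.happyEdges c' \ G.happyEdges c := by
    rintro _ ⟨⟨u, v⟩, ⟨⟨hu : u ∈ B, hv : c v = a⟩, huv⟩, rfl⟩
    have hub : c u = b := hBb hu
    have hvB : v ∉ B := fun h => hab (hv.symm.trans (hBb h))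
    simp [huv, hc'_in u hu, hc'_out v hvB, hv, hub, hab.symm]
  have hinj : InjOn Sym2.mk.uncurry {q ∈ B ×ˢ (c ⁻¹' {a}) | G.Adj q.1 q.2} := by
    rintro ⟨u, v⟩ ⟨⟨hu, -⟩, -⟩ ⟨u', v'⟩ ⟨⟨-, hv' : c v' = a⟩, -⟩ h
    rcases Sym2.eq_iff.1 h with ⟨rfl, rfl⟩ | ⟨rfl, -⟩
    · rfl
    · exact absurd (hv'.symm.trans (hBb hu)) hab
  -- an edge stops being happy only if exactly one end is recolored
  have hloss : G.happyEdges c \ G.happyEdges c' ⊆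
      Sym2.mk.uncurry '' {q ∈ B ×ˢ (c ⁻¹' {b} \ B) | G.Adj q.1 q.2} := by
    have key : ∀ u v, u ∈ B → v ∉ B → G.Adj u v → c u = c v →
        s(u, v) ∈ Sym2.mk.uncurry '' {q ∈ B ×ˢ (c ⁻¹' {b} \ B) | G.Adj q.1 q.2} :=
      fun u v hu hv huv h => ⟨(u, v), ⟨⟨hu, (h.symm.trans (hBb hu) : c v = b), hv⟩, huv⟩, rfl⟩
    refine fun e => Sym2.ind (fun u v ⟨he, he'⟩ => ?_) e
    rw [mk_mem_happyEdges] at he he'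
    by_cases hu : u ∈ B <;> by_cases hv : v ∈ B
    · exact absurd ⟨he.1, by rw [hc'_in u hu, hc'_in v hv]⟩ he'
    · exact key u v hu hv he.1 he.2
    · rw [Sym2.eq_swap]; exact key v u hv hu he.1.symm he.2.symm
    · exact absurd ⟨he.1, by rw [hc'_out u hu, hc'_out v hv, he.2]⟩ he'
  have hle : (G.happyEdges c' \ G.happyEdges c).ncard ≤
      (G.happyEdges c \ G.happyEdges c').ncard := by
    have := hopt c' fun v hv => hc'_out v (disjoint_right.1 hBS hv)
    rwa [happyEdgeCount_eq_ncard_happyEdges, happyEdgeCount_eq_ncard_happyEdges,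
      ncard_le_ncard_iff_ncard_sdiff_le_ncard_sdiff] at this
  calc _ = (Sym2.mk.uncurry '' {q ∈ B ×ˢ (c ⁻¹' {a}) | G.Adj q.1 q.2}).ncard :=
        hinj.ncard_image.symm
    _ ≤ _ := ncard_le_ncard hgain
    _ ≤ _ := hle
    _ ≤ _ := ncard_le_ncard hloss
    _ ≤ _ := ncard_image_le (toFinite _)

variable {X : Set V}

theorem ncard_inter_add_ncard_le_of_isClique
    (hopt : ∀ c', EqOn c' c S → happyEdgeCount G c' ≤ happyEdgeCount G c)
    (hX : G.IsClique Xᶜ) {B : Set V} (hBX : B ⊆ Xᶜ) (hBS : Disjoint B S) (hBb : B ⊆ c ⁻¹' {b})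
    (hB : B.Nonempty) (hab : a ≠ b) :
    (Xᶜ ∩ c ⁻¹' {a}).ncard + B.ncard ≤ (c ⁻¹' {b}).ncard := by
  have hgain : B ×ˢ (Xᶜ ∩ c ⁻¹' {a}) ⊆ {q ∈ B ×ˢ (c ⁻¹' {a}) | G.Adj q.1 q.2} := by
    rintro ⟨u, v⟩ ⟨hu : u ∈ B, hv, hva : c v = a⟩
    have hne : u ≠ v := fun h => hab (hva.symm.trans (h ▸ hBb hu))
    exact ⟨⟨hu, hva⟩, hX (hBX hu) hv hne⟩
  have hprod : B.ncard * (Xᶜ ∩ c ⁻¹' {a}).ncard ≤ B.ncard * (c ⁻¹' {b} \ B).ncard := by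
    simpa only [ncard_prod] using (ncard_le_ncard hgain).trans
      ((ncard_adj_le_of_recolor hopt hBS hBb hab).trans (ncard_le_ncard (sep_subset _ _)))
  have := Nat.le_of_mul_le_mul_left hprod ((ncard_pos (toFinite B)).2 hB)
  have := ncard_sdiff_add_ncard_of_subset hBb
  omega

theorem ncard_add_ncard_le_of_isClique
    (hopt : ∀ c', EqOn c' c S → happyEdgeCount G c' ≤ happyEdgeCount G c)
    (hX : G.IsClique Xᶜ) (hab : a ≠ b) (ha : ((Xᶜ \ S) ∩ c ⁻¹' {a}).Nonempty)
    (hb : ((Xᶜ \ S) ∩ c ⁻¹' {b}).Nonempty) :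
    ((Xᶜ \ S) ∩ c ⁻¹' {a}).ncard + ((Xᶜ \ S) ∩ c ⁻¹' {b}).ncard ≤
      (X ∩ c ⁻¹' {a}).ncard + (X ∩ c ⁻¹' {b}).ncard := by
  have hsplit : ∀ γ, (Xᶜ ∩ c ⁻¹' {γ}).ncard + (X ∩ c ⁻¹' {γ}).ncard = (c ⁻¹' {γ}).ncard :=
    fun γ => by
      rw [← ncard_inter_add_ncard_sdiff_eq_ncard (c ⁻¹' {γ}) X, sdiff_eq,
        inter_comm (c ⁻¹' {γ}) X, inter_comm (c ⁻¹' {γ}) Xᶜ, add_comm]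
  have hmono : ∀ γ, ((Xᶜ \ S) ∩ c ⁻¹' {γ}).ncard ≤ (Xᶜ ∩ c ⁻¹' {γ}).ncard :=
    fun γ => ncard_le_ncard (inter_subset_inter_left _ sdiff_subset)
  have hUX : Xᶜ \ S ⊆ Xᶜ := sdiff_subset
  have hUS : Disjoint (Xᶜ \ S) S := disjoint_sdiff_left
  have := ncard_inter_add_ncard_le_of_isClique hopt hX (inter_subset_left.trans hUX)
    (hUS.mono_left inter_subset_left) inter_subset_right hb hab
  have := ncard_inter_add_ncard_le_of_isClique hopt hX (inter_subset_left.trans hUX)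
    (hUS.mono_left inter_subset_left) inter_subset_right ha hab.symm
  have := hsplit a
  have := hsplit b
  have := hmono a
  have := hmono b
  omega

end SimpleGraph

/-- Let `X` be a set of `d` vertices of `G` whose complement is a clique, and let `p` be a
partial coloring of `G`.  If the set `C_U` of uncolored clique vertices has more than `d + 1`
elements, then every extension of `p` maximizing the number of happy edges colors all vertices
of `C_U` with a single color. -/
theorem optimal_coloring_constant_on_uncolored_clique
    {V Col : Type*} [Fintype V] (G : SimpleGraph V) (X : Set V) (d : ℕ) (hd : X.ncard = d)
    (hclique : ∀ u ∉ X, ∀ v ∉ X, u ≠ v → G.Adj u v)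
    (S : Set V) (p : S → Col)
    (hCU : d + 1 < {v | v ∉ X ∧ v ∉ S}.ncard)
    (c : V → Col) (hc : ∀ v (hv : v ∈ S), c v = p ⟨v, hv⟩)
    (hopt : ∀ c' : V → Col, (∀ v (hv : v ∈ S), c' v = p ⟨v, hv⟩) →
      happyEdgeCount G c' ≤ happyEdgeCount G c) :
    ∀ u ∈ {v | v ∉ X ∧ v ∉ S}, ∀ w ∈ {v | v ∉ X ∧ v ∉ S}, c u = c w := by
  change d + 1 < (Xᶜ \ S).ncard at hCU
  change ∀ u ∈ Xᶜ \ S, ∀ w ∈ Xᶜ \ S, c u = c w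
  intro u hu w hw
  by_contra hne
  have hopt' : ∀ c', EqOn c' c S → happyEdgeCount G c' ≤ happyEdgeCount G c :=
    fun c' h => hopt c' fun v hv => (h hv).trans (hc v hv)
  classical
  let P := (toFinite (c '' (Xᶜ \ S))).toFinset
  have hP : ∀ γ ∈ P, ((Xᶜ \ S) ∩ c ⁻¹' {γ}).Nonempty := fun γ hγ => by
    obtain ⟨v, hv, rfl⟩ := (Finite.mem_toFinset _).1 hγ
    exact ⟨v, hv, rfl⟩
  have hPcard : 1 < P.card := Finset.one_lt_card.2
    ⟨c u, by simpa [P] using ⟨u, hu, rfl⟩, c w, by simpa [P] using ⟨w, hw, rfl⟩, hne⟩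
  let f : Col → ℤ := fun γ => ((Xᶜ \ S) ∩ c ⁻¹' {γ}).ncard - (X ∩ c ⁻¹' {γ}).ncard
  have hpair : ∀ a ∈ P, ∀ b ∈ P, a ≠ b → f a + f b ≤ 0 := fun a ha b hb hab => by
    have := SimpleGraph.ncard_add_ncard_le_of_isClique hopt' hclique hab (hP a ha) (hP b hb)
    simp only [f]
    omega
  have hsum := Finset.sum_nonpos_of_add_nonpos hPcard hpair
  have hU := (Xᶜ \ S).ncard_le_sum_ncard_inter_preimage c P fun v hv => by
    simpa [P] using ⟨v, hv, rfl⟩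
  have hX := X.sum_ncard_inter_preimage_le c P
  simp only [f, Finset.sum_sub_distrib] at hsum
  zify at hU hX
  omega
end

section
/- Let G be a finite simple graph, let X ⊆ V(G) with |X| = d, and suppose that C = V(G) \ X is a clique. Let p : S → C be a partial coloring of G that uses more than d + 1 distinct colors on S. Then the precoloring p uses at least two distinct colors on S ∩ C, and consequently, for every total coloring c extending p, no vertex of C is happy with respect to c. -/
theorem Set.ncard_preimage_val_le {α : Type*} {S X : Set α} (hX : X.Finite) :
    (Subtype.val ⁻¹' X : Set S).ncard ≤ X.ncard :=
  Set.ncard_le_ncard_of_injOn Subtype.val (fun _ h ↦ h) Subtype.val_injective.injOn hX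

theorem Function.exists_notMem_apply_ne_of_ncard_add_one_lt {α β : Type*} (f : α → β)
    {A : Set α} (hA : A.Finite) (h : A.ncard + 1 < (Set.range f).ncard) :
    ∃ a ∉ A, ∃ b ∉ A, f a ≠ f b := by
  have hrange : Set.range f = f '' A ∪ f '' Aᶜ := by
    rw [← Set.image_union, Set.union_compl_self, Set.image_univ]
  have hfin : (Set.range f).Finite := Set.finite_of_ncard_pos (by omega)
  have hcompl : 1 < (f '' Aᶜ).ncard := by
    have hunion := Set.ncard_union_le (f '' A) (f '' Aᶜ)
    have himage := Set.ncard_image_le (f := f) hA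
    rw [← hrange] at hunion
    omega
  obtain ⟨_, _, ⟨a, ha, rfl⟩, ⟨b, hb, rfl⟩, hab⟩ :=
    (Set.one_lt_ncard_iff (hfin.subset (Set.image_subset_range f _))).mp hcompl
  exact ⟨a, ha, b, hb, hab⟩

theorem IsHappyVertex.apply_eq_of_isClique {V Col : Type*} {G : SimpleGraph V} {c : V → Col}
    {v : V} (hv : IsHappyVertex G c v) {C : Set V} (hC : G.IsClique C) (hvC : v ∈ C)
    {u : V} (huC : u ∈ C) : c u = c v := by
  obtain rfl | huv := eq_or_ne u v
  · rfl
  · exact hv u (hC hvC huC huv.symm)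

/-- Let `X` be a set of `d` vertices of `G` whose complement `C` is a clique.  If a partial
coloring `p` uses more than `d + 1` distinct colors, then it uses at least two distinct colors
on `S ∩ C`, and consequently no extension of `p` makes any vertex of `C` happy. -/
theorem many_colors_clique_no_happy_vertex
    {V Col : Type*} [Fintype V] (G : SimpleGraph V) (X : Set V) (d : ℕ) (hd : X.ncard = d)
    (hclique : ∀ u ∉ X, ∀ v ∉ X, u ≠ v → G.Adj u v)
    (S : Set V) (p : S → Col)
    (hcolors : d + 1 < (Set.range p).ncard) :
    (∃ (a b : V) (ha : a ∈ S) (hb : b ∈ S), a ∉ X ∧ b ∉ X ∧ p ⟨a, ha⟩ ≠ p ⟨b, hb⟩) ∧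
    (∀ c : V → Col, (∀ v (hv : v ∈ S), c v = p ⟨v, hv⟩) →
      ∀ v ∉ X, ¬ IsHappyVertex G c v) := by
  have hC : G.IsClique Xᶜ := fun u hu v hv huv ↦ hclique u hu v hv huv
  obtain ⟨a, haX, b, hbX, hab⟩ := p.exists_notMem_apply_ne_of_ncard_add_one_lt
    (A := Subtype.val ⁻¹' X) (Set.toFinite _)
    (by have := Set.ncard_preimage_val_le (S := S) X.toFinite; omega)
  refine ⟨⟨a, b, a.2, b.2, haX, hbX, hab⟩, fun c hc v hvX hv ↦ hab ?_⟩
  rw [← hc a a.2, ← hc b b.2, hv.apply_eq_of_isClique hC hvX haX,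
    hv.apply_eq_of_isClique hC hvX hbX]
end

section
/- Let G be a finite simple graph, p : S → C a partial coloring, X ⊆ V(G), χ an equivalence relation (partition) on X, and Y ⊆ X. For a vertex v, let λ(v) = { p(u) : u ∈ N[v] ∩ S } be the set of colors used by p on the closed neighborhood of v. Suppose there exists a total coloring c such that: c extends p; every vertex of Y is happy with respect to c; and for all u, v ∈ X, c(u) = c(v) if and only if u and v are χ-equivalent. Then: (1) for every v ∈ Y, λ(v) has at most one element; (2) for all χ-equivalent u, v ∈ Y with λ(u) and λ(v) both nonempty, λ(u) = λ(v); (3) for all u, v ∈ Y that are not χ-equivalent, N(u) ∩ N(v) = ∅; and (4) for every v ∈ Y, every u ∈ N(v) ∩ X is χ-equivalent to v. -/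
/-- The paper's `λ(v)`. -/
def closedNbhdPrecolors {V Col : Type*} (G : SimpleGraph V) {S : Set V} (p : S → Col) (v : V) :
    Set Col :=
  {col : Col | ∃ u, (u = v ∨ G.Adj v u) ∧ ∃ hu : u ∈ S, p ⟨u, hu⟩ = col}

namespace IsHappyVertex

variable {V Col : Type*} {G : SimpleGraph V} {c : V → Col}

lemma closedNbhdPrecolors_subset {S : Set V} {p : S → Col} {v : V}
    (hext : ∀ u (hu : u ∈ S), c u = p ⟨u, hu⟩) (hv : IsHappyVertex G c v) :
    closedNbhdPrecolors G p v ⊆ {c v} := by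
  rintro _ ⟨u, hu, huS, rfl⟩
  rw [Set.mem_singleton_iff, ← hext u huS]
  rcases hu with rfl | hadj
  · rfl
  · exact hv u hadj

lemma apply_eq_of_mem_inter_neighborSet {u v w : V} (hu : IsHappyVertex G c u)
    (hv : IsHappyVertex G c v) (hw : w ∈ G.neighborSet u ∩ G.neighborSet v) : c u = c v :=
  (hu w hw.1).symm.trans (hv w hw.2)

end IsHappyVertex

theorem valid_coloring_necessary_conditions_general
    {V Col : Type*} (G : SimpleGraph V) (S : Set V) (p : S → Col)
    (X : Set V) (χ : V → V → Prop) (Y : Set V) (hYX : Y ⊆ X)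
    (lam : V → Set Col)
    (hlam : ∀ v, lam v = {col : Col | ∃ u, (u = v ∨ G.Adj v u) ∧ ∃ hu : u ∈ S, p ⟨u, hu⟩ = col})
    (c : V → Col)
    (hext : ∀ v (hv : v ∈ S), c v = p ⟨v, hv⟩)
    (hhappy : ∀ v ∈ Y, IsHappyVertex G c v)
    (hχ : ∀ u ∈ X, ∀ v ∈ X, (c u = c v ↔ χ u v)) :
    (∀ v ∈ Y, (lam v).Subsingleton) ∧
    (∀ u ∈ Y, ∀ v ∈ Y, χ u v → (lam u).Nonempty → (lam v).Nonempty → lam u = lam v) ∧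
    (∀ u ∈ Y, ∀ v ∈ Y, ¬ χ u v → G.neighborSet u ∩ G.neighborSet v = ∅) ∧
    (∀ v ∈ Y, ∀ u, G.Adj v u → u ∈ X → χ u v) := by
  have lam_subset (v : V) (hv : v ∈ Y) : lam v ⊆ {c v} :=
    hlam v ▸ (hhappy v hv).closedNbhdPrecolors_subset hext
  refine ⟨fun v hv ↦ Set.subsingleton_singleton.anti (lam_subset v hv), ?_, ?_, ?_⟩
  · intro u hu v hv huv hu_ne hv_ne
    rw [hu_ne.subset_singleton_iff.mp (lam_subset u hu),
      hv_ne.subset_singleton_iff.mp (lam_subset v hv), (hχ u (hYX hu) v (hYX hv)).mpr huv]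
  · intro u hu v hv huv
    refine Set.eq_empty_of_forall_notMem fun w hw ↦ huv ?_
    exact (hχ u (hYX hu) v (hYX hv)).mp
      ((hhappy u hu).apply_eq_of_mem_inter_neighborSet (hhappy v hv) hw)
  · intro v hv u hadj huX
    exact (hχ u huX v (hYX hv)).mp (hhappy v hv u hadj)

/-- Necessary conditions for a valid coloring respecting `(χ, Y)`: if `c` extends `p`, makes
every vertex of `Y ⊆ X` happy, and colors `u, v ∈ X` equally iff they are `χ`-equivalent, then
the four conditions `(⋆)` hold, where `lam v` is the set of colors used by `p` on `N[v]`. -/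
theorem valid_coloring_necessary_conditions
    {V Col : Type*} [Fintype V] (G : SimpleGraph V) (S : Set V) (p : S → Col)
    (X : Set V) (χ : V → V → Prop) (Y : Set V) (hYX : Y ⊆ X)
    (lam : V → Set Col)
    (hlam : ∀ v, lam v = {col : Col | ∃ u, (u = v ∨ G.Adj v u) ∧ ∃ hu : u ∈ S, p ⟨u, hu⟩ = col})
    (c : V → Col)
    (hext : ∀ v (hv : v ∈ S), c v = p ⟨v, hv⟩)
    (hhappy : ∀ v ∈ Y, IsHappyVertex G c v)
    (hχ : ∀ u ∈ X, ∀ v ∈ X, (c u = c v ↔ χ u v)) :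
    (∀ v ∈ Y, (lam v).Subsingleton) ∧
    (∀ u ∈ Y, ∀ v ∈ Y, χ u v → (lam u).Nonempty → (lam v).Nonempty → lam u = lam v) ∧
    (∀ u ∈ Y, ∀ v ∈ Y, ¬ χ u v → G.neighborSet u ∩ G.neighborSet v = ∅) ∧
    (∀ v ∈ Y, ∀ u, G.Adj v u → u ∈ X → χ u v) :=
  valid_coloring_necessary_conditions_general G S p X χ Y hYX lam hlam c hext hhappy hχ
end
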